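/- (Lemma 2 of Lawrence–Ron) Let a, b_1, ..., b_l be integers and define the ℤ[[h]]-linear map φ on the ring B of formal power series in h = q-1 whose coefficients are integer Laurent polynomials in q^μ, by φ(q^{mμ}) = (q^{(m+1)^2} + q^{(m-1)^2} - 2q^{m^2})/(2q - 2). Then φ(q^{aμ} ∏_{j=1}^l (q^{μ-b_j} - 1)) is divisible by h^{⌈l/2⌉} in ℚ[[h]]. -/

import Mathlib

open Finset LaurentPolynomial

/-- The formal variable `q`, in the field of rational functions `ℚ(q)`. -/
noncomputable def q : RatFunc ℚ := RatFunc.X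

/-- `h = q - 1`. -/
noncomputable def h : RatFunc ℚ := q - 1

/-- The value of the map `φ = φ_{-1}` on the monomial `q^{mμ}`:
`φ(q^{mμ}) = (q^{(m+1)²} + q^{(m-1)²} - 2q^{m²})/(2q - 2)`. -/
noncomputable def phiMonomial (m : ℤ) : RatFunc ℚ :=
  (q ^ ((m + 1) ^ 2) + q ^ ((m - 1) ^ 2) - 2 * q ^ (m ^ 2)) / (2 * q - 2)

/-- The linear extension of `φ` to Laurent polynomials in `t = q^μ` with
coefficients in `ℚ(q)`. -/
noncomputable def phi (f : LaurentPolynomial (RatFunc ℚ)) : RatFunc ℚ :=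
  f.coeff.sum fun m c => c * phiMonomial m

/-!
Write `Δ` for the forward difference in `m`. Since `φ` is linear, `φ(t^m (t-1)^n) = Δⁿ φ(t^m)`,
and `φ(t^m) = Δ² G(m-1) / 2h` for the Gaussian sequence `G k = q^{k²}`; so
`φ(t^m (t-1)^n) = Δ^{n+2} G(m-1) / 2h`. Expanding `q^{k²} = Σ_d C(k², d) h^d`, the coefficient of
`h^d` is a polynomial of degree `2d` in `k`, killed by `Δ^N` as soon as `2d < N`; hence
`h^{⌈N/2⌉}` divides `Δ^N G`. Finally
`∏ (q^{-b_j} t - 1) = ∏ ((t - 1) + (q^{-b_j} - 1) t)`, and each factor `q^{-b_j} - 1` is divisible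
by `h`, so a term of the expansion with `s` such factors is divisible by `h^{s + ⌈(l-s)/2⌉}`.
-/

lemma map_fwdDiff_iter {M G G' F : Type*} [AddCommMonoid M] [AddCommGroup G] [AddCommGroup G']
    [FunLike F G G'] [AddMonoidHomClass F G G'] (φ : F) (d : M) (f : M → G) (n : ℕ) (y : M) :
    φ ((fwdDiff d)^[n] f y) = (fwdDiff d)^[n] (φ ∘ f) y := by
  simp [fwdDiff_iter_eq_sum_shift, map_sum, map_zsmul]

lemma fwdDiff_iter_comp_intCast {R G : Type*} [Ring R] [AddCommGroup G] (f : R → G) (n : ℕ)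
    (c : ℤ) : (fwdDiff 1)^[n] (f ∘ Int.cast) c = (fwdDiff 1)^[n] f (c : R) := by
  simp [fwdDiff_iter_eq_sum_shift]

section GaussianSequence

open Polynomial

noncomputable def gaussMonomial (R : Type*) [Semiring R] (k : ℤ) : R[X] := X ^ (k.natAbs ^ 2)

variable {K : Type*} [Field K] [CharZero K]

lemma exists_natDegree_le_eval_eq_choose_natAbs_sq (d : ℕ) :
    ∃ Q : K[X], Q.natDegree ≤ 2 * d ∧
      ∀ k : ℤ, Q.eval (k : K) = ((k.natAbs ^ 2).choose d : K) := by
  refine ⟨Polynomial.C (d.factorial : K)⁻¹ * (descPochhammer K d).comp (X ^ 2), ?_, fun k => ?_⟩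
  · refine (natDegree_C_mul_le _ _).trans ?_
    rw [natDegree_comp, descPochhammer_natDegree, natDegree_X_pow, mul_comm]
  · have hk : (k : K) ^ 2 = ((k.natAbs ^ 2 : ℕ) : K) := by
      rw [← Int.cast_natCast, Nat.cast_pow, Int.natAbs_sq, Int.cast_pow]
    rw [eval_mul, eval_C, eval_comp, eval_pow, eval_X, hk,
      descPochhammer_eval_eq_descFactorial, Nat.descFactorial_eq_factorial_mul_choose,
      Nat.cast_mul, inv_mul_cancel_left₀ (Nat.cast_ne_zero.mpr d.factorial_ne_zero)]

lemma fwdDiff_iter_choose_natAbs_sq_eq_zero {d N : ℕ} (hdN : 2 * d < N) (c : ℤ) :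
    (fwdDiff 1)^[N] (fun k : ℤ => ((k.natAbs ^ 2).choose d : K)) c = 0 := by
  obtain ⟨Q, hQ, hQeval⟩ := exists_natDegree_le_eval_eq_choose_natAbs_sq (K := K) d
  rw [← funext hQeval, show (fun k : ℤ => Q.eval (k : K)) = Q.eval ∘ Int.cast from rfl,
    fwdDiff_iter_comp_intCast, fwdDiff_iter_eq_zero_of_degree_lt (hQ.trans_lt hdN),
    Pi.zero_apply]

theorem X_sub_one_pow_dvd_fwdDiff_iter_gaussMonomial (N : ℕ) (c : ℤ) :
    (X - 1) ^ ((N + 1) / 2) ∣ (fwdDiff 1)^[N] (gaussMonomial K) c := by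
  rw [← map_one Polynomial.C, X_sub_C_pow_dvd_iff, X_pow_dvd_iff]
  intro d hd
  rw [← taylor_apply, ← lcoeff_apply, ← LinearMap.comp_apply, map_fwdDiff_iter]
  convert fwdDiff_iter_choose_natAbs_sq_eq_zero (K := K) (d := d) (N := N) (by omega) c with k
  simp [gaussMonomial, coeff_X_add_one_pow]

end GaussianSequence

section DivisibilityByH

open Polynomial

lemma q_ne_zero : q ≠ 0 := RatFunc.X_ne_zero

lemma algebraMap_X_pow (e : ℕ) : algebraMap ℚ[X] (RatFunc ℚ) (X ^ e) = q ^ e := by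
  rw [map_pow, RatFunc.algebraMap_X]
  rfl

lemma h_eq : h = algebraMap ℚ[X] (RatFunc ℚ) (X - 1) := by
  rw [map_sub, map_one, RatFunc.algebraMap_X]
  rfl

lemma h_ne_zero : h ≠ 0 := by
  rw [h_eq, ne_eq, map_eq_zero_iff _ (RatFunc.algebraMap_injective ℚ)]
  exact X_sub_C_ne_zero 1

/-- `x ∈ h ^ n • ℚ[q, q⁻¹]`. -/
def HPowDvd (n : ℕ) (x : RatFunc ℚ) : Prop :=
  ∃ (p : ℚ[X]) (e : ℕ), (X - 1) ^ n ∣ p ∧ x * q ^ e = algebraMap ℚ[X] (RatFunc ℚ) p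

lemma hPowDvd_zero (n : ℕ) : HPowDvd n 0 := ⟨0, 0, dvd_zero _, by simp⟩

lemma HPowDvd.mono {m n : ℕ} {x : RatFunc ℚ} (hmn : m ≤ n) (hx : HPowDvd n x) :
    HPowDvd m x := by
  obtain ⟨p, e, hp, hx⟩ := hx
  exact ⟨p, e, (pow_dvd_pow _ hmn).trans hp, hx⟩

lemma HPowDvd.add {n : ℕ} {x y : RatFunc ℚ} (hx : HPowDvd n x) (hy : HPowDvd n y) :
    HPowDvd n (x + y) := by
  obtain ⟨p, e, hp, hx⟩ := hx
  obtain ⟨r, f, hr, hy⟩ := hy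
  refine ⟨p * X ^ f + r * X ^ e, e + f, dvd_add (hp.mul_right _) (hr.mul_right _), ?_⟩
  rw [map_add, map_mul, map_mul, algebraMap_X_pow, algebraMap_X_pow, ← hx, ← hy]
  ring

lemma HPowDvd.mul {m n : ℕ} {x y : RatFunc ℚ} (hx : HPowDvd m x) (hy : HPowDvd n y) :
    HPowDvd (m + n) (x * y) := by
  obtain ⟨p, e, hp, hx⟩ := hx
  obtain ⟨r, f, hr, hy⟩ := hy
  refine ⟨p * r, e + f, pow_add (X - 1 : ℚ[X]) m n ▸ mul_dvd_mul hp hr, ?_⟩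
  rw [map_mul, ← hx, ← hy]
  ring

lemma hPowDvd_sum {ι : Type*} {s : Finset ι} {n : ℕ} {x : ι → RatFunc ℚ}
    (hx : ∀ i ∈ s, HPowDvd n (x i)) : HPowDvd n (∑ i ∈ s, x i) := by
  classical
  induction s using Finset.induction with
  | empty => exact hPowDvd_zero n
  | insert i s hi ih =>
    rw [Finset.sum_insert hi]
    exact (hx i (Finset.mem_insert_self i s)).add
      (ih fun j hj => hx j (Finset.mem_insert_of_mem hj))

lemma hPowDvd_prod {ι : Type*} {s : Finset ι} {n : ι → ℕ} {x : ι → RatFunc ℚ}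
    (hx : ∀ i ∈ s, HPowDvd (n i) (x i)) : HPowDvd (∑ i ∈ s, n i) (∏ i ∈ s, x i) := by
  classical
  induction s using Finset.induction with
  | empty => exact ⟨1, 0, by simp, by simp⟩
  | insert i s hi ih =>
    rw [Finset.sum_insert hi, Finset.prod_insert hi]
    exact (hx i (Finset.mem_insert_self i s)).mul
      (ih fun j hj => hx j (Finset.mem_insert_of_mem hj))

lemma hPowDvd_q_zpow_sub_one (k : ℤ) : HPowDvd 1 (q ^ k - 1) := by
  obtain ⟨n, rfl | rfl⟩ := Int.eq_nat_or_neg k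
  · refine ⟨X ^ n - 1, 0, by rw [pow_one]; exact sub_one_dvd_pow_sub_one X n, ?_⟩
    simp [algebraMap_X_pow]
  · refine ⟨1 - X ^ n, n, by rw [pow_one]; exact dvd_sub_comm.mp (sub_one_dvd_pow_sub_one X n), ?_⟩
    rw [map_sub, map_one, algebraMap_X_pow, sub_mul, zpow_neg, zpow_natCast,
      inv_mul_cancel₀ (pow_ne_zero n q_ne_zero), one_mul]

lemma hPowDvd_algebraMap_div_two_mul_h {n : ℕ} {p : ℚ[X]} (hp : (X - 1) ^ (n + 1) ∣ p) :
    HPowDvd n (algebraMap ℚ[X] (RatFunc ℚ) p / (2 * h)) := by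
  obtain ⟨r, rfl⟩ := hp
  refine ⟨(X - 1) ^ n * (Polynomial.C (1 / 2) * r), 0, dvd_mul_right _ _, ?_⟩
  rw [pow_zero, mul_one, div_eq_iff (mul_ne_zero two_ne_zero h_ne_zero), h_eq]
  simp only [map_mul, map_pow, RatFunc.algebraMap_C, map_div₀, map_one, map_ofNat]
  ring

lemma HPowDvd.exists_eq_h_pow_mul_div {n : ℕ} {x : RatFunc ℚ} (hx : HPowDvd n x) :
    ∃ (p : ℚ[X]) (e : ℕ), x = h ^ n * algebraMap ℚ[X] (RatFunc ℚ) p / q ^ e := by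
  obtain ⟨p, e, ⟨r, rfl⟩, hx⟩ := hx
  refine ⟨r, e, ?_⟩
  rw [eq_div_iff (pow_ne_zero _ q_ne_zero), hx, map_mul, map_pow, h_eq]

end DivisibilityByH

section Phi

open Polynomial

lemma algebraMap_gaussMonomial (k : ℤ) :
    algebraMap ℚ[X] (RatFunc ℚ) (gaussMonomial ℚ k) = q ^ (k ^ 2) := by
  rw [gaussMonomial, algebraMap_X_pow, ← Int.natAbs_sq, ← zpow_natCast]
  push_cast
  rfl

lemma phiMonomial_eq (m : ℤ) :
    phiMonomial m =
      algebraMap ℚ[X] (RatFunc ℚ) ((fwdDiff 1)^[2] (gaussMonomial ℚ) (m - 1)) / (2 * h) := by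
  simp only [fwdDiff_iter_eq_sum_shift, Finset.sum_range_succ, Finset.sum_range_zero, map_add,
    map_zsmul, algebraMap_gaussMonomial]
  rw [phiMonomial, h]
  norm_num
  ring_nf

noncomputable def phiₗ : LaurentPolynomial (RatFunc ℚ) →ₗ[RatFunc ℚ] RatFunc ℚ :=
  Finsupp.linearCombination (RatFunc ℚ) phiMonomial ∘ₗ
    (AddMonoidAlgebra.coeffLinearEquiv (RatFunc ℚ)).toLinearMap

lemma phiₗ_apply (f : LaurentPolynomial (RatFunc ℚ)) : phiₗ f = phi f := rfl

lemma phi_T (m : ℤ) : phi (T m) = phiMonomial m := by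
  rw [← phiₗ_apply, phiₗ, LinearMap.comp_apply, LinearEquiv.coe_coe,
    AddMonoidAlgebra.coeffLinearEquiv_apply, T, AddMonoidAlgebra.coeff_single,
    Finsupp.linearCombination_single, one_smul]

lemma phi_T_mul_sub_one_pow (m : ℤ) (n : ℕ) :
    phi (T m * (T 1 - 1) ^ n) = (fwdDiff 1)^[n] phiMonomial m := by
  induction n generalizing m with
  | zero => rw [pow_zero, mul_one, phi_T, Function.iterate_zero_apply]
  | succ n ih =>
    rw [pow_succ', ← mul_assoc, mul_sub, mul_one, ← T_add, sub_mul, ← phiₗ_apply, map_sub,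
      phiₗ_apply, phiₗ_apply, ih, ih, Function.iterate_succ_apply', fwdDiff]

lemma phi_T_mul_sub_one_pow_eq_fwdDiff_iter_gaussMonomial (m : ℤ) (n : ℕ) :
    phi (T m * (T 1 - 1) ^ n) =
      algebraMap ℚ[X] (RatFunc ℚ) ((fwdDiff 1)^[n + 2] (gaussMonomial ℚ) (m - 1)) / (2 * h) := by
  let F : ℚ[X] →+ RatFunc ℚ :=
    (AddMonoidHom.mulRight (2 * h)⁻¹).comp (algebraMap ℚ[X] (RatFunc ℚ)).toAddMonoidHom
  have hF : phiMonomial = F ∘ fun k => (fwdDiff 1)^[2] (gaussMonomial ℚ) (k + -1) := by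
    ext k
    simp [F, phiMonomial_eq, div_eq_mul_inv, sub_eq_add_neg]
  rw [phi_T_mul_sub_one_pow, hF, ← map_fwdDiff_iter, fwdDiff_iter_comp_add,
    ← Function.iterate_add_apply, sub_eq_add_neg]
  simp [F, div_eq_mul_inv]

lemma hPowDvd_phi_T_mul_sub_one_pow (m : ℤ) (n : ℕ) :
    HPowDvd ((n + 1) / 2) (phi (T m * (T 1 - 1) ^ n)) := by
  rw [phi_T_mul_sub_one_pow_eq_fwdDiff_iter_gaussMonomial]
  apply hPowDvd_algebraMap_div_two_mul_h
  simpa [show (n + 2 + 1) / 2 = (n + 1) / 2 + 1 by omega]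
    using X_sub_one_pow_dvd_fwdDiff_iter_gaussMonomial (n + 2) (m - 1)

end Phi

lemma prod_C_mul_T_sub_one {R ι : Type*} [CommRing R] [Fintype ι] [DecidableEq ι] (c : ι → R) :
    ∏ j, (C (c j) * T 1 - 1 : R[T;T⁻¹]) =
      ∑ s ∈ univ.powerset, C (∏ j ∈ s, (c j - 1)) *
        (T #s * (T 1 - 1) ^ (Fintype.card ι - #s)) := by
  have hsplit : ∀ j, (C (c j) * T 1 - 1 : R[T;T⁻¹]) =
      C (c j - 1) * T 1 + (T 1 - 1) := fun j => by
    rw [map_sub, map_one]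
    ring
  simp_rw [hsplit, prod_add, prod_mul_distrib, prod_const, ← map_prod, T_pow, mul_one,
    ← card_compl, compl_eq_univ_sdiff, mul_assoc]

lemma hPowDvd_phi_T_mul_prod (l : ℕ) (a : ℤ) (b : Fin l → ℤ) :
    HPowDvd ((l + 1) / 2) (phi (T a * ∏ j : Fin l, (C (q ^ (-(b j))) * T 1 - 1))) := by
  rw [prod_C_mul_T_sub_one, ← phiₗ_apply, mul_sum, map_sum]
  refine hPowDvd_sum fun s _ => ?_
  rw [mul_left_comm, ← mul_assoc (T a), ← T_add, ← LaurentPolynomial.smul_eq_C_mul, map_smul,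
    smul_eq_mul, phiₗ_apply, Fintype.card_fin]
  have hc : HPowDvd #s (∏ j ∈ s, (q ^ (-(b j)) - 1)) := by
    simpa using hPowDvd_prod fun j _ => hPowDvd_q_zpow_sub_one (-(b j))
  refine (hc.mul (hPowDvd_phi_T_mul_sub_one_pow _ _)).mono ?_
  have hs : #s ≤ l := (card_le_univ s).trans_eq (Fintype.card_fin l)
  omega

/-- Lemma 2 of Lawrence–Ron: for integers `a, b₁, …, b_l`, the element
`φ(q^{aμ} ∏_{j=1}^l (q^{μ-b_j} - 1))` is divisible by `h^{⌈l/2⌉}` in `ℚ[[h]]`.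
Since `φ` of the expression is a Laurent polynomial in `q`, this divisibility is
expressed as: it equals `(q-1)^{⌈l/2⌉} p(q)/q^e` for some polynomial `p` over `ℚ`
and some `e : ℕ`. -/
theorem lemma2_divisibility (l : ℕ) (a : ℤ) (b : Fin l → ℤ) :
    ∃ (p : Polynomial ℚ) (e : ℕ),
      phi (T a * ∏ j : Fin l, (C (q ^ (-(b j))) * T 1 - 1))
        = h ^ ((l + 1) / 2) * (algebraMap (Polynomial ℚ) (RatFunc ℚ) p) / q ^ e :=
  (hPowDvd_phi_T_mul_prod l a b).exists_eq_h_pow_mul_div
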